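/- For all (y₀,y₁,y₂,y₃,y₄) ∈ ℂ⁵ satisfying 6y₄² + y₀² + 3(y₁² + y₂² + y₃²) = 0, one has 36·G_I(y₀,y₁,y₂,y₃,y₄) = −H(y₀,y₁,y₂,y₃), where H := 5y₀⁴ + 6y₀²(y₁² + y₂² + y₃²) − 27(y₁⁴ + y₂⁴ + y₃⁴) − 90(y₁²y₂² + y₁²y₃² + y₂²y₃²) + 72y₀y₁y₂y₃. (Thus the quotient quartic surface W ⊂ ℙ³ is defined by H = 0.) -/

import Mathlib

/-- The Igusa quartic polynomial, as a function on `ℂ⁵`. -/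
def GI (y0 y1 y2 y3 y4 : ℂ) : ℂ :=
  y4 ^ 4 + (y0 ^ 2 - y1 ^ 2 - y2 ^ 2 - y3 ^ 2) * y4 ^ 2 +
    y1 ^ 2 * y2 ^ 2 + y1 ^ 2 * y3 ^ 2 + y2 ^ 2 * y3 ^ 2 - 2 * (y0 * y1 * y2 * y3)

/-- The quartic polynomial `H` defining the surface `W ⊂ ℙ³`, as a function on `ℂ⁴`. -/
def H (y0 y1 y2 y3 : ℂ) : ℂ :=
  5 * y0 ^ 4 + 6 * y0 ^ 2 * (y1 ^ 2 + y2 ^ 2 + y3 ^ 2) -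
    27 * (y1 ^ 4 + y2 ^ 4 + y3 ^ 4) -
    90 * (y1 ^ 2 * y2 ^ 2 + y1 ^ 2 * y3 ^ 2 + y2 ^ 2 * y3 ^ 2) +
    72 * (y0 * y1 * y2 * y3)

theorem thirtySix_mul_GI_add_H (y0 y1 y2 y3 y4 : ℂ) :
    36 * GI y0 y1 y2 y3 y4 + H y0 y1 y2 y3 =
      (6 * y4 ^ 2 + 5 * y0 ^ 2 - 9 * (y1 ^ 2 + y2 ^ 2 + y3 ^ 2)) *
        (6 * y4 ^ 2 + y0 ^ 2 + 3 * (y1 ^ 2 + y2 ^ 2 + y3 ^ 2)) := by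
  unfold GI H
  ring

/-- For all `(y₀,y₁,y₂,y₃,y₄) ∈ ℂ⁵` satisfying `6y₄² + y₀² + 3(y₁² + y₂² + y₃²) = 0`,
one has `36·G_I(y₀,y₁,y₂,y₃,y₄) = −H(y₀,y₁,y₂,y₃)`. -/
theorem igusa_restricts_to_W (y0 y1 y2 y3 y4 : ℂ)
    (h : 6 * y4 ^ 2 + y0 ^ 2 + 3 * (y1 ^ 2 + y2 ^ 2 + y3 ^ 2) = 0) :
    36 * GI y0 y1 y2 y3 y4 = -H y0 y1 y2 y3 := by
  have hsum := thirtySix_mul_GI_add_H y0 y1 y2 y3 y4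
  rw [h, mul_zero] at hsum
  exact eq_neg_of_add_eq_zero_left hsum
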